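/- Any convex combination of FTRL learning dynamics guarantees constant regret. Precisely: let h_1,…,h_k : Δ^n → ℝ be strictly convex continuous regularizers, let f_ℓ(q) = argmax_{x ∈ Δ^n} (⟨q, x⟩ − h_ℓ(x)), let α_1,…,α_k ≥ 0 with ∑_ℓ α_ℓ = 1, and consider the learning dynamic with conversion function f = ∑_ℓ α_ℓ f_ℓ and initial state q⁰. Then for every continuous payoff stream p : [0,∞) → ℝ^n and every T > 0, the regret at time T is at most max_{1≤j≤n} ∑_{ℓ=1}^k α_ℓ ( h_ℓ*(q⁰) − q⁰_j + h_ℓ(e_j) ). -/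

import Mathlib

open scoped BigOperators
open MeasureTheory

noncomputable section

/-- The standard probability simplex in ℝⁿ. -/
def simplex (n : ℕ) : Set (Fin n → ℝ) := {x | (∀ j, 0 ≤ x j) ∧ ∑ j, x j = 1}

/-- Euclidean inner product on ℝⁿ. -/
def dot {n : ℕ} (a b : Fin n → ℝ) : ℝ := ∑ j, a j * b j

/-- The cumulative-payoff trajectory q(t) = q⁰ + ∫₀ᵗ p(τ) dτ. -/
def traj {n : ℕ} (q0 : Fin n → ℝ) (p : ℝ → Fin n → ℝ) (t : ℝ) : Fin n → ℝ :=
  q0 + ∫ τ in (0:ℝ)..t, p τ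

/-!
Write `h*_ℓ(q) = ⟨q, f_ℓ q⟩ - h_ℓ(f_ℓ q)` for the conjugate of `h_ℓ` on the simplex. Since `f_ℓ q`
is the maximizer, it is a subgradient of `h*_ℓ` at `q`; strict convexity makes the maximizer
unique, so by compactness of the simplex `f_ℓ` is continuous, and a convex function with a
continuous subgradient is differentiable with that gradient. Hence `Φ = ∑ α_ℓ h*_ℓ` has gradient
`f = ∑ α_ℓ f_ℓ`, and along `q(t) = q⁰ + ∫₀ᵗ p` we get `∫₀ᵀ ⟨p, f(q)⟩ = Φ(q(T)) - Φ(q⁰)`, while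
`∫₀ᵀ p_j = q_j(T) - q⁰_j`. The regret against action `j` is therefore `Ψ_j(q⁰) - Ψ_j(q(T))` with
`Ψ_j(q) = ∑ α_ℓ (h*_ℓ(q) - q_j + h_ℓ(e_j))`, and `Ψ_j ≥ 0` by the Fenchel–Young inequality at
`x = e_j`.
-/

open Filter Topology Set

/-- A form of Berge's maximum theorem. -/
theorem continuous_of_isMaxOn_of_unique {X Y : Type*} [TopologicalSpace X] [TopologicalSpace Y]
    [T2Space Y] {K : Set Y} (hK : IsCompact K) {φ : X → Y → ℝ}
    (hφ : ContinuousOn (Function.uncurry φ) (univ ×ˢ K)) {f : X → Y} (hfK : ∀ x, f x ∈ K)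
    (hmax : ∀ x, IsMaxOn (φ x) K (f x)) (huniq : ∀ x, ∀ y ∈ K, IsMaxOn (φ x) K y → y = f x) :
    Continuous f := by
  refine continuous_iff_continuousAt.2 fun x => ?_
  refine hK.tendsto_nhds_of_unique_mapClusterPt (.of_forall hfK) fun y hy hxy => huniq x y hy ?_
  have hgraph : MapClusterPt (x, y) (𝓝 x) fun x' => (x', f x') := by
    rw [((𝓝 x).basis_sets.prod_nhds (𝓝 y).basis_sets).mapClusterPt_iff_frequently]
    rintro ⟨U, V⟩ ⟨hU, hV⟩
    exact ((mapClusterPt_iff_frequently.1 hxy V hV).and_eventually hU).mono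
      fun _ h => ⟨h.2, h.1⟩
  intro z hz
  have hclosed : IsClosed ((univ ×ˢ K) ∩ (fun p : X × Y => (φ p.1 z, φ p.1 p.2)) ⁻¹'
      {a : ℝ × ℝ | a.1 ≤ a.2}) := by
    refine ContinuousOn.preimage_isClosed_of_isClosed ?_ (isClosed_univ.prod hK.isClosed)
      (isClosed_le continuous_fst continuous_snd)
    exact (hφ.comp (continuous_fst.prodMk continuous_const).continuousOn
      fun _ _ => ⟨trivial, hz⟩).prodMk hφ
  exact (hclosed.mem_of_mapClusterPt hgraph
    (.of_forall fun x' => ⟨⟨trivial, hfK x'⟩, hmax x' hz⟩)).2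

/-- The remainder `F v - F w - g w (v - w)` lies between `0` and `(g v - g w) (v - w)`. -/
theorem hasFDerivAt_of_subgradient {E : Type*} [NormedAddCommGroup E] [NormedSpace ℝ E]
    {F : E → ℝ} {g : E → StrongDual ℝ E} {w : E} (hsub : ∀ u v, F u + g u (v - u) ≤ F v)
    (hg : ContinuousAt g w) : HasFDerivAt F (g w) w := by
  refine .of_isLittleO <| Asymptotics.isLittleO_iff.2 fun c hc => ?_
  filter_upwards [hg (Metric.closedBall_mem_nhds (g w) hc)] with v hv
  have hlo := hsub w v
  have hhi : F v - F w ≤ g v (v - w) := by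
    have := hsub v w
    rw [← neg_sub, map_neg] at this
    linarith
  have hgap : g v (v - w) - g w (v - w) ≤ c * ‖v - w‖ := calc
    _ = (g v - g w) (v - w) := rfl
    _ ≤ ‖g v - g w‖ * ‖v - w‖ := (le_abs_self _).trans ((g v - g w).le_opNorm _)
    _ ≤ c * ‖v - w‖ := by gcongr; exact mem_closedBall_iff_norm.1 hv
  rw [Real.norm_eq_abs, abs_le]
  constructor <;> linarith [mul_nonneg hc.le (norm_nonneg (v - w))]

section FTRL

variable {n : ℕ}

def dotCLM : (Fin n → ℝ) →ₗ[ℝ] StrongDual ℝ (Fin n → ℝ) :=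
  LinearMap.toContinuousLinearMap.toLinearMap ∘ₗ (dotProductEquiv ℝ (Fin n)).toLinearMap

theorem dotCLM_apply (v x : Fin n → ℝ) : dotCLM v x = dot x v :=
  dotProduct_comm v x

/-- Under `IsFTRLConversion h f` this is the conjugate `h* q`. -/
def ftrlPotential (h : (Fin n → ℝ) → ℝ) (f : (Fin n → ℝ) → Fin n → ℝ) (q : Fin n → ℝ) : ℝ :=
  dot q (f q) - h (f q)

def IsFTRLConversion (h : (Fin n → ℝ) → ℝ) (f : (Fin n → ℝ) → Fin n → ℝ) : Prop :=
  ∀ q, f q ∈ simplex n ∧ ∀ x ∈ simplex n, dot q x - h x ≤ dot q (f q) - h (f q)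

namespace IsFTRLConversion

variable {h : (Fin n → ℝ) → ℝ} {f : (Fin n → ℝ) → Fin n → ℝ}

theorem continuous (hf : IsFTRLConversion h f) (hconv : StrictConvexOn ℝ (simplex n) h)
    (hcont : ContinuousOn h (simplex n)) : Continuous f := by
  refine continuous_of_isMaxOn_of_unique (isCompact_stdSimplex ℝ (Fin n))
    (φ := fun q x => dot q x - h x) ?_ (fun q => (hf q).1) (fun q => (hf q).2)
    fun q y hy hmax => ?_
  · exact ((continuous_fst.dotProduct continuous_snd).continuousOn).sub
      (hcont.comp continuousOn_snd fun p hp => hp.2)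
  · have hconc : StrictConcaveOn ℝ (simplex n) fun x => dot q x - h x :=
      ((dotProductEquiv ℝ (Fin n) q).concaveOn (convex_stdSimplex ℝ (Fin n))).sub_strictConvexOn
        hconv
    exact hconc.eq_of_isMaxOn hmax (hf q).2 hy (hf q).1

theorem potential_add_dot_sub_le (hf : IsFTRLConversion h f) (q q' : Fin n → ℝ) :
    ftrlPotential h f q + dot (q' - q) (f q) ≤ ftrlPotential h f q' := by
  have := (hf q').2 (f q) (hf q).1
  simp only [ftrlPotential, dot, Pi.sub_apply, sub_mul, Finset.sum_sub_distrib] at this ⊢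
  linarith

theorem hasFDerivAt_potential (hf : IsFTRLConversion h f) (hfc : Continuous f) (q : Fin n → ℝ) :
    HasFDerivAt (ftrlPotential h f) (dotCLM (f q)) q :=
  hasFDerivAt_of_subgradient (g := fun u => dotCLM (f u))
    (fun u v => by simpa only [dotCLM_apply] using hf.potential_add_dot_sub_le u v)
    ((LinearMap.continuous_of_finiteDimensional dotCLM).comp hfc).continuousAt

theorem apply_le_potential_add (hf : IsFTRLConversion h f) (q : Fin n → ℝ) (j : Fin n) :
    q j ≤ ftrlPotential h f q + h (Pi.single j 1) := by
  have := (hf q).2 _ (single_mem_stdSimplex ℝ j)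
  simp only [dot, Pi.single_apply, mul_ite, mul_one, mul_zero, Finset.sum_ite_eq',
    Finset.mem_univ, if_true] at this
  unfold ftrlPotential dot
  linarith

end IsFTRLConversion

variable {q0 : Fin n → ℝ} {p : ℝ → Fin n → ℝ}

theorem traj_zero : traj q0 p 0 = q0 := by
  simp [traj]

theorem hasDerivAt_traj (hp : Continuous p) (t : ℝ) : HasDerivAt (traj q0 p) (p t) t :=
  (intervalIntegral.integral_hasDerivAt_right (hp.intervalIntegrable 0 t)
    (hp.stronglyMeasurableAtFilter _ _) hp.continuousAt).const_add q0

theorem intervalIntegral_apply_eq_traj_sub (hp : Continuous p) (T : ℝ) (j : Fin n) :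
    ∫ τ in (0:ℝ)..T, p τ j = traj q0 p T j - q0 j := by
  rw [intervalIntegral.integral_eq_sub_of_hasDerivAt (f := fun t => traj q0 p t j)
    (fun t _ => hasDerivAt_pi.1 (hasDerivAt_traj hp t) j)
    (((continuous_apply j).comp hp).intervalIntegrable _ _), traj_zero]

theorem intervalIntegral_dot_eq_sub_of_hasFDerivAt {Φ : (Fin n → ℝ) → ℝ}
    {g : (Fin n → ℝ) → Fin n → ℝ}
    (hΦ : ∀ w, HasFDerivAt Φ (dotCLM (g w)) w) (hg : Continuous g) (hp : Continuous p) (T : ℝ) :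
    ∫ τ in (0:ℝ)..T, dot (p τ) (g (traj q0 p τ)) = Φ (traj q0 p T) - Φ q0 := by
  have htraj : Continuous (traj q0 p) :=
    continuous_iff_continuousAt.2 fun t => (hasDerivAt_traj hp t).continuousAt
  rw [intervalIntegral.integral_eq_sub_of_hasDerivAt (f := fun t => Φ (traj q0 p t))
    (f' := fun τ => dot (p τ) (g (traj q0 p τ)))
    (fun t _ => by simpa only [dotCLM_apply, Function.comp_def] using
      (hΦ _).comp_hasDerivAt t (hasDerivAt_traj hp t))
    ((hp.dotProduct (hg.comp htraj)).intervalIntegrable _ _), traj_zero]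

theorem sum_mul_potential_sub_apply_add_nonneg {ι : Type*} [Fintype ι]
    {h : ι → (Fin n → ℝ) → ℝ} {f : ι → (Fin n → ℝ) → Fin n → ℝ}
    (hf : ∀ ℓ, IsFTRLConversion (h ℓ) (f ℓ)) {α : ι → ℝ} (hα : ∀ ℓ, 0 ≤ α ℓ)
    (q : Fin n → ℝ) (j : Fin n) :
    0 ≤ ∑ ℓ, α ℓ * (ftrlPotential (h ℓ) (f ℓ) q - q j + h ℓ (Pi.single j 1)) :=
  Finset.sum_nonneg fun ℓ _ => mul_nonneg (hα ℓ) <| by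
    linarith [(hf ℓ).apply_le_potential_add q j]

end FTRL

theorem convex_combination_ftrl_constant_regret
    (n k : ℕ) [NeZero n] (h : Fin k → (Fin n → ℝ) → ℝ)
    (hconv : ∀ ℓ, StrictConvexOn ℝ (simplex n) (h ℓ))
    (hcont : ∀ ℓ, ContinuousOn (h ℓ) (simplex n))
    (f : Fin k → (Fin n → ℝ) → (Fin n → ℝ))
    (hf : ∀ ℓ q, f ℓ q ∈ simplex n ∧
      ∀ x ∈ simplex n, dot q x - h ℓ x ≤ dot q (f ℓ q) - h ℓ (f ℓ q))
    (α : Fin k → ℝ) (hα : ∀ ℓ, 0 ≤ α ℓ) (hα1 : ∑ ℓ, α ℓ = 1)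
    (q0 : Fin n → ℝ) :
    ∀ (p : ℝ → Fin n → ℝ), Continuous p → ∀ T : ℝ, 0 < T →
      (⨆ j, ∫ τ in (0:ℝ)..T, p τ j) -
        (∫ τ in (0:ℝ)..T, dot (p τ) (∑ ℓ, α ℓ • f ℓ (traj q0 p τ)))
      ≤ ⨆ j, ∑ ℓ, α ℓ *
          ((dot q0 (f ℓ q0) - h ℓ (f ℓ q0)) - q0 j + h ℓ (Pi.single j 1)) := by
  intro p hp T _
  have hfc ℓ : Continuous (f ℓ) := IsFTRLConversion.continuous (hf ℓ) (hconv ℓ) (hcont ℓ)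
  set Φ := fun w => ∑ ℓ, α ℓ * ftrlPotential (h ℓ) (f ℓ) w
  have hΦ w : HasFDerivAt Φ (dotCLM (∑ ℓ, α ℓ • f ℓ w)) w := by
    simpa only [map_sum, map_smul] using HasFDerivAt.fun_sum fun ℓ _ =>
      (IsFTRLConversion.hasFDerivAt_potential (hf ℓ) (hfc ℓ) w).const_mul (α ℓ)
  have hsplit w j : ∑ ℓ, α ℓ * (ftrlPotential (h ℓ) (f ℓ) w - w j + h ℓ (Pi.single j 1)) =
      Φ w - w j + ∑ ℓ, α ℓ * h ℓ (Pi.single j 1) := by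
    simp only [Φ, mul_add, mul_sub, Finset.sum_add_distrib, Finset.sum_sub_distrib,
      ← Finset.sum_mul, hα1, one_mul]
  rw [intervalIntegral_dot_eq_sub_of_hasFDerivAt hΦ
    (continuous_finsetSum _ fun ℓ _ => (hfc ℓ).const_smul (α ℓ)) hp, sub_le_iff_le_add]
  refine ciSup_le fun j => ?_
  rw [intervalIntegral_apply_eq_traj_sub hp, ← sub_le_iff_le_add]
  refine le_trans ?_ (le_ciSup (Set.finite_range _).bddAbove j)
  have hT := sum_mul_potential_sub_apply_add_nonneg (fun ℓ => hf ℓ) hα (traj q0 p T) j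
  change _ ≤ ∑ ℓ, α ℓ * (ftrlPotential (h ℓ) (f ℓ) q0 - q0 j + h ℓ (Pi.single j 1))
  rw [hsplit] at hT ⊢
  linarith
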